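/- For every i ∈ ℤ one has C_{i+d} = φ(X_i), where X_i = Σ_{j∈ℤ} 𝔪^j ⊗_{O_k} 𝔪^{i−j} ⊂ K ⊗_k K. -/

import Mathlib

set_option synthInstance.maxHeartbeats 1000000
set_option maxHeartbeats 1000000

open scoped TensorProduct

noncomputable section

/-- A normalized additive discrete valuation turning `K` into a complete discrete
valuation field (the value at `0` is junk). -/
structure CDVF (K : Type) [Field K] where
  v : K → ℤ
  v_mul : ∀ {x y : K}, x ≠ 0 → y ≠ 0 → v (x * y) = v x + v y
  v_add : ∀ {x y : K}, x ≠ 0 → y ≠ 0 → x + y ≠ 0 → min (v x) (v y) ≤ v (x + y)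
  v_one : v 1 = 0
  exists_uniformizer : ∃ x : K, x ≠ 0 ∧ v x = 1
  complete : ∀ f : ℕ → K,
    (∀ N : ℤ, ∃ M : ℕ, ∀ i ≥ M, ∀ j ≥ M, f i = f j ∨ N ≤ v (f i - f j)) →
    ∃ x : K, ∀ N : ℤ, ∃ M : ℕ, ∀ i ≥ M, f i = x ∨ N ≤ v (f i - x)

namespace CDVF

variable {K : Type} [Field K] (S : CDVF K)

/-- The ring of integers of a complete discrete valuation field. -/
def O : Subring K where
  carrier := {x : K | x = 0 ∨ 0 ≤ S.v x}
  zero_mem' := Or.inl rfl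
  one_mem' := Or.inr S.v_one.ge
  mul_mem' := by
    rintro x y hx hy
    rcases eq_or_ne x 0 with rfl | hx0
    · exact Or.inl (zero_mul _)
    rcases eq_or_ne y 0 with rfl | hy0
    · exact Or.inl (mul_zero _)
    · refine Or.inr ?_
      rw [S.v_mul hx0 hy0]
      have h1 := hx.resolve_left hx0
      have h2 := hy.resolve_left hy0
      omega
  add_mem' := by
    rintro x y hx hy
    rcases eq_or_ne x 0 with rfl | hx0
    · simpa using hy
    rcases eq_or_ne y 0 with rfl | hy0
    · simpa using hx
    rcases eq_or_ne (x + y) 0 with h | h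
    · exact Or.inl h
    · refine Or.inr ?_
      have h3 := S.v_add hx0 hy0 h
      have h1 := hx.resolve_left hx0
      have h2 := hy.resolve_left hy0
      omega
  neg_mem' := by
    rintro x hx
    rcases eq_or_ne x 0 with rfl | hx0
    · simp
    · refine Or.inr ?_
      have hn : S.v (-x) = S.v x := by
        have h1 : (-1 : K) ≠ 0 := by simp
        have e : (-1 : K) * (-1) = 1 := by ring
        have h2 := S.v_mul (x := (-1 : K)) (y := (-1 : K)) h1 h1
        rw [e, S.v_one] at h2
        have h3 := S.v_mul (x := (-1 : K)) (y := x) h1 hx0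
        rw [neg_one_mul] at h3
        omega
      rw [hn]
      exact hx.resolve_left hx0

/-- The maximal ideal of the ring of integers. -/
def mIdeal : Ideal S.O where
  carrier := {x : S.O | (x : K) = 0 ∨ 1 ≤ S.v (x : K)}
  zero_mem' := Or.inl rfl
  add_mem' := by
    rintro x y hx hy
    rcases eq_or_ne ((x : K)) 0 with h1 | h1
    · have : ((x + y : S.O) : K) = (y : K) := by push_cast [h1]; ring
      rw [Set.mem_setOf_eq, this]; exact hy
    rcases eq_or_ne ((y : K)) 0 with h2 | h2
    · have : ((x + y : S.O) : K) = (x : K) := by push_cast [h2]; ring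
      rw [Set.mem_setOf_eq, this]; exact hx
    rcases eq_or_ne ((x : K) + (y : K)) 0 with h | h
    · exact Or.inl (by push_cast; exact h)
    · refine Or.inr ?_
      have h3 := S.v_add h1 h2 h
      have hx' := hx.resolve_left h1
      have hy' := hy.resolve_left h2
      have : ((x + y : S.O) : K) = (x : K) + (y : K) := by push_cast; ring
      rw [this]
      omega
  smul_mem' := by
    rintro c x hx
    rcases eq_or_ne ((c : K)) 0 with h1 | h1
    · exact Or.inl (by push_cast [smul_eq_mul, h1]; ring)
    rcases eq_or_ne ((x : K)) 0 with h2 | h2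
    · exact Or.inl (by push_cast [smul_eq_mul, h2]; ring)
    · refine Or.inr ?_
      have hc : (c : K) = 0 ∨ 0 ≤ S.v (c : K) := c.2
      have hc' := hc.resolve_left h1
      have hx' := hx.resolve_left h2
      have : ((c • x : S.O) : K) = (c : K) * (x : K) := by push_cast [smul_eq_mul]; ring
      rw [this, S.v_mul h1 h2]
      omega

/-- The residue field (as a quotient ring). -/
abbrev Residue : Type := S.O ⧸ S.mIdeal

instance instCommRingPolyResidue : CommRing (Polynomial S.Residue) :=
  Polynomial.commRing

open Classical in
/-- Reduction map `O_K → k̄`, extended by (junk) zero outside of `O_K`. -/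
def redK (x : K) : S.Residue :=
  if h : x ∈ S.O then Ideal.Quotient.mk S.mIdeal ⟨x, h⟩ else 0

/-- The ring `R = k̄[X]/(X^n - 1)`. -/
abbrev Rring (n : ℕ) : Type :=
  Polynomial S.Residue ⧸ Ideal.span {(Polynomial.X : Polynomial S.Residue) ^ n - 1}

/-- The class of the variable `X` in `R`. -/
def mkX (n : ℕ) : S.Rring n :=
  Ideal.Quotient.mk _ Polynomial.X

instance instAlgebraResidueRring (n : ℕ) : Algebra S.Residue (S.Rring n) :=
  Ideal.Quotient.algebra _

instance instModuleResidueRring (n : ℕ) : Module S.Residue (S.Rring n) :=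
  Algebra.toModule

end CDVF

/-- A totally ramified extension `K/k` of complete discrete valuation fields,
where `v` is the normalized valuation of `K`. -/
structure TotallyRamified (k K : Type) [Field k] [Field K] [Algebra k K]
    extends CDVF K where
  finiteDim : FiniteDimensional k K
  val_dvd : ∀ x : k, x ≠ 0 →
    (Module.finrank k K : ℤ) ∣ toCDVF.v (algebraMap k K x)
  exists_base_uniformizer : ∃ x : k, x ≠ 0 ∧
    toCDVF.v (algebraMap k K x) = (Module.finrank k K : ℤ)
  residue_trivial : ∀ x : K, (x = 0 ∨ 0 ≤ toCDVF.v x) →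
    ∃ y : k, x - algebraMap k K y = 0 ∨ 1 ≤ toCDVF.v (x - algebraMap k K y)

/-- A totally ramified extension together with its ramification depth `d`;
`d` is characterized by the property that the codifferent of `K/k`
(the trace-dual of `O_K`) equals `𝔪^(1-d-n)`, i.e. `d = v(different) - n + 1`. -/
structure TotallyRamifiedD (k K : Type) [Field k] [Field K] [Algebra k K]
    extends TotallyRamified k K where
  depth : ℤ
  depth_spec : ∀ x : K,
    (∀ y : K, (y = 0 ∨ 0 ≤ toCDVF.v y) →
      (Algebra.trace k K (x * y) = 0 ∨
        0 ≤ toCDVF.v (algebraMap k K (Algebra.trace k K (x * y))))) ↔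
    (x = 0 ∨ 1 - depth - (Module.finrank k K : ℤ) ≤ toCDVF.v x)

section GaloisModules

variable (k : Type) {K : Type} [Field k] [Field K] [Algebra k K]

/-- The action of the group algebra `K[G]` on `K`: `(Σ a_σ σ)(x) = Σ a_σ σ(x)`. -/
def applyGA (f : MonoidAlgebra K (K ≃ₐ[k] K)) (x : K) : K :=
  f.coeff.sum fun σ a => a * σ x

/-- The filtration module `C_i ⊆ K[G]`. -/
def CfilGA (S : CDVF K) (i : ℤ) : Set (MonoidAlgebra K (K ≃ₐ[k] K)) :=
  {f | ∀ x : K, x ≠ 0 → applyGA k f x = 0 ∨ S.v x + i ≤ S.v (applyGA k f x)}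

/-- `f ∈ K[G]` has all its coefficients in (the image of) `k₀`. -/
def coeffsIn (k₀ : Type) [CommRing k₀] [Algebra k₀ K]
    (f : MonoidAlgebra K (K ≃ₐ[k] K)) : Prop :=
  ∀ σ : K ≃ₐ[k] K, ∃ c : k₀, f.coeff σ = algebraMap k₀ K c

/-- The `k₀`-submodule `k₀[G] ⊆ K[G]`. -/
def baseSub (k₀ : Type) [Field k₀] [Algebra k₀ K] :
    Submodule k₀ (MonoidAlgebra K (K ≃ₐ[k] K)) where
  carrier := {f | coeffsIn k k₀ f}
  zero_mem' := by intro σ; exact ⟨0, by simp⟩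
  add_mem' := by
    intro f g hf hg σ
    obtain ⟨c, hc⟩ := hf σ
    obtain ⟨d, hd⟩ := hg σ
    refine ⟨c + d, ?_⟩
    rw [map_add, ← hc, ← hd]
    exact Finsupp.add_apply f.coeff g.coeff σ
  smul_mem' := by
    intro a f hf σ
    obtain ⟨c, hc⟩ := hf σ
    refine ⟨a * c, ?_⟩
    rw [MonoidAlgebra.coeff_smul, Finsupp.smul_apply, hc, map_mul, Algebra.smul_def]

/-- `d(f)`: the unique integer `i` with `f ∈ C_{i+d} ∖ C_{i+d+1}` (junk value if
no such integer exists). -/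
def dOfGA (S : TotallyRamifiedD k K) (f : MonoidAlgebra K (K ≃ₐ[k] K)) : ℤ :=
  Classical.epsilon fun i : ℤ =>
    f ∈ CfilGA k S.toCDVF (i + S.depth) ∧ f ∉ CfilGA k S.toCDVF (i + S.depth + 1)

/-- The map `p_i : C_i → R = k̄[X]/(X^n-1)`,
`p_i(f) = r(c_π)⁻¹ Σ_j r(f(π^{j-i})/π^j) X^j` (junk outside `C_i`). -/
def pGA (S : TotallyRamifiedD k K) (π : K) (i : ℤ)
    (f : MonoidAlgebra K (K ≃ₐ[k] K)) :
    S.toCDVF.Rring (Module.finrank k K) :=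
  Ring.inverse
      (algebraMap S.toCDVF.Residue _
        (S.toCDVF.redK (algebraMap k K (Algebra.trace k K (π ^ (-S.depth))))))
    * ∑ j ∈ Finset.range (Module.finrank k K),
        algebraMap S.toCDVF.Residue _
            (S.toCDVF.redK (applyGA k f (π ^ ((j : ℤ) - i)) / π ^ j))
          * (S.toCDVF.mkX (Module.finrank k K)) ^ j

/-- `ρ(f) = p_{d(f)+d}(f)`. -/
def rhoGA (S : TotallyRamifiedD k K) (π : K) (f : MonoidAlgebra K (K ≃ₐ[k] K)) :
    S.toCDVF.Rring (Module.finrank k K) :=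
  pGA k S π (dOfGA k S f + S.depth) f

/-- `B_s = {f ∈ B : d(f) ≡ s mod e₀}`. -/
def BpartGA (S : TotallyRamifiedD k K) (e₀ : ℤ)
    (B : Set (MonoidAlgebra K (K ≃ₐ[k] K))) (s : ℤ) :
    Set (MonoidAlgebra K (K ≃ₐ[k] K)) :=
  {f | f ∈ B ∧ Int.ModEq e₀ (dOfGA k S f) s}

/-- `B` is graded-independent (relative to the modulus `e₀`): for every `s`
the set `ρ(B_s) ⊆ R` is linearly independent over the residue field. -/
def GradedIndepGA (S : TotallyRamifiedD k K) (π : K) (e₀ : ℤ)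
    (B : Set (MonoidAlgebra K (K ≃ₐ[k] K))) : Prop :=
  ∀ s : ℤ, LinearIndependent S.toCDVF.Residue
    (fun g : (rhoGA k S π '' BpartGA k S e₀ B s) =>
      (g : S.toCDVF.Rring (Module.finrank k K)))

/-- The (lower) ramification jump of `σ ∈ G`: `h(σ) = v(σ(π) - π) - 1`. -/
def rjump (S : CDVF K) (π : K) (σ : K ≃ₐ[k] K) : ℤ :=
  S.v (σ π - π) - 1

/-- The ramification depth of a subextension `L/k` of `K/k`, where `e` is the
ramification index of `K/L`: `D` is the depth of `L/k` iff the trace-dual of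
`O_L` equals `𝔪_L^(1-D-[L:k])`. -/
def IsSubDepth (S : CDVF K) (L : IntermediateField k K) (e D : ℤ) : Prop :=
  ∀ x : ↥L,
    (∀ y : ↥L, ((y : K) = 0 ∨ 0 ≤ S.v (y : K)) →
      (Algebra.trace k ↥L (x * y) = 0 ∨
        0 ≤ S.v (algebraMap k K (Algebra.trace k ↥L (x * y))))) ↔
    ((x : K) = 0 ∨ e * (1 - D - (Module.finrank k ↥L : ℤ)) ≤ S.v (x : K))

end GaloisModules

section Phi

variable (k K : Type) [Field k] [Field K] [Algebra k K]

/-- The isomorphism `φ : K ⊗_k K → K[G]`, `x ⊗ y ↦ x Σ_σ σ(y) σ`. -/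
def phiGA [FiniteDimensional k K] :
    K ⊗[k] K →ₗ[k] MonoidAlgebra K (K ≃ₐ[k] K) :=
  TensorProduct.lift
    { toFun := fun x =>
        { toFun := fun y => ∑ σ : K ≃ₐ[k] K, MonoidAlgebra.single σ (x * σ y)
          map_add' := fun y z => by
            rw [← Finset.sum_add_distrib]
            refine Finset.sum_congr rfl fun σ _ => ?_
            rw [map_add, mul_add, MonoidAlgebra.single_add]
          map_smul' := fun a y => by
            rw [RingHom.id_apply, Finset.smul_sum]
            refine Finset.sum_congr rfl fun σ _ => ?_
            rw [map_smul, MonoidAlgebra.smul_single]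
            congr 1
            rw [Algebra.smul_def, Algebra.smul_def]
            ring }
      map_add' := fun x x' => LinearMap.ext fun y => by
        show (∑ σ : K ≃ₐ[k] K, MonoidAlgebra.single σ ((x + x') * σ y)) =
          (∑ σ : K ≃ₐ[k] K, MonoidAlgebra.single σ (x * σ y)) +
            ∑ σ : K ≃ₐ[k] K, MonoidAlgebra.single σ (x' * σ y)
        rw [← Finset.sum_add_distrib]
        refine Finset.sum_congr rfl fun σ _ => ?_
        rw [add_mul, MonoidAlgebra.single_add]
      map_smul' := fun a x => LinearMap.ext fun y => by
        show (∑ σ : K ≃ₐ[k] K, MonoidAlgebra.single σ ((a • x) * σ y)) =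
          a • ∑ σ : K ≃ₐ[k] K, MonoidAlgebra.single σ (x * σ y)
        rw [Finset.smul_sum]
        refine Finset.sum_congr rfl fun σ _ => ?_
        rw [MonoidAlgebra.smul_single]
        congr 1
        rw [Algebra.smul_def, Algebra.smul_def]
        ring }

/-- Coefficientwise (Hadamard) product on `K[G]`. -/
def hadamardGA (f g : MonoidAlgebra K (K ≃ₐ[k] K)) :
    MonoidAlgebra K (K ≃ₐ[k] K) :=
  MonoidAlgebra.ofCoeff (Finsupp.zipWith (· * ·) (mul_zero 0) f.coeff g.coeff)

/-- The filtration `X_i = Σ_j 𝔪^j ⊗_{O_k} 𝔪^{i-j} ⊆ K ⊗_k K`. -/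
def Xfil (S : CDVF K) (i : ℤ) : AddSubgroup (K ⊗[k] K) :=
  AddSubgroup.closure
    {z | ∃ (x y : K) (j : ℤ), (x = 0 ∨ j ≤ S.v x) ∧ (y = 0 ∨ i - j ≤ S.v y) ∧
      z = x ⊗ₜ[k] y}

/-- The subring `O_K ⊗_{O_k} O_K ⊆ K ⊗_k K` (more precisely, its image). -/
def OOsub (S : CDVF K) : Subring (K ⊗[k] K) :=
  Subring.closure
    {z | ∃ x y : K, (x = 0 ∨ 0 ≤ S.v x) ∧ (y = 0 ∨ 0 ≤ S.v y) ∧ z = x ⊗ₜ[k] y}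

/-- The partial (pre)order on `ℤ²` induced by the componentwise order on the
quotient `𝒳 = ℤ²/∼`, where `(a,b) ∼ (a-nc, b+nc)`. -/
def classLE (n : ℤ) (q q' : ℤ × ℤ) : Prop :=
  ∃ c : ℤ, q.1 ≤ q'.1 + n * c ∧ q.2 ≤ q'.2 - n * c

/-- `α ∈ K ⊗_k K` is diagonal: it can be written as `Σ ε_{ij} π^i ⊗ π^j` with
`ε_{ij}` units of `O_K ⊗_{O_k} O_K`, the classes of the pairs `(i,j)` pairwise
incomparable, and `i + j` constant. -/
def DiagonalT (S : CDVF K) (π : K) (n : ℤ) (α : K ⊗[k] K) : Prop :=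
  ∃ (T : Finset (ℤ × ℤ)) (ε : ℤ × ℤ → K ⊗[k] K) (c : ℤ),
    (∀ q ∈ T, ε q ∈ OOsub k K S ∧ ∃ β ∈ OOsub k K S, ε q * β = 1) ∧
    (∀ q ∈ T, ∀ q' ∈ T, q ≠ q' → ¬classLE n q q' ∧ ¬classLE n q' q) ∧
    (∀ q ∈ T, q.1 + q.2 = c) ∧
    α = ∑ q ∈ T, (ε q) * ((π ^ q.1) ⊗ₜ[k] (π ^ q.2))

/-- The defining properties of the canonical map `r_X : X_0/X_1 → k̄[X]/(X^n-1)`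
(viewed as a function on `X_0 ⊆ K ⊗_k K`): it is additive and multiplicative on
`X_0`, unital, kills `X_1`, sends `π ⊗ π⁻¹` to `X` and is `k̄`-linear. -/
def IsRX (S : CDVF K) (n : ℕ) (π : K) (ψ : K ⊗[k] K → S.Rring n) : Prop :=
  (∀ x y : K ⊗[k] K, x ∈ Xfil k K S 0 → y ∈ Xfil k K S 0 →
    ψ (x + y) = ψ x + ψ y) ∧
  (∀ x y : K ⊗[k] K, x ∈ Xfil k K S 0 → y ∈ Xfil k K S 0 →
    ψ (x * y) = ψ x * ψ y) ∧
  ψ 1 = 1 ∧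
  (∀ x ∈ Xfil k K S 1, ψ x = 0) ∧
  ψ (π ⊗ₜ[k] π⁻¹) = S.mkX n ∧
  (∀ c : k, (c = 0 ∨ 0 ≤ S.v (algebraMap k K c)) →
    ψ (algebraMap k K c ⊗ₜ[k] (1 : K)) =
      algebraMap S.Residue (S.Rring n) (S.redK (algebraMap k K c)))

end Phi

section TensorMapSec

variable (k' k K' K : Type) [Field k'] [Field k] [Field K'] [Field K]
  [Algebra k' k] [Algebra k' K'] [Algebra k K] [Algebra K' K] [Algebra k' K]
  [IsScalarTower k' k K] [IsScalarTower k' K' K]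

/-- The natural map `K' ⊗_{k'} K' → K ⊗_k K`, `x ⊗ y ↦ x ⊗ y`. -/
def tensorMap : K' ⊗[k'] K' →+ K ⊗[k] K :=
  TensorProduct.liftAddHom
    { toFun := fun x =>
        { toFun := fun y => algebraMap K' K x ⊗ₜ[k] algebraMap K' K y
          map_zero' := by simp
          map_add' := by intro y z; simp [map_add, TensorProduct.tmul_add] }
      map_zero' := by
        ext y; simp
      map_add' := by
        intro x z; ext y; simp [map_add, TensorProduct.add_tmul] }
    (by
      intro r m n
      have h : ∀ u : K', algebraMap K' K (r • u) =
          (algebraMap k' k r) • (algebraMap K' K u) := by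
        intro u
        rw [Algebra.smul_def, map_mul, Algebra.smul_def]
        congr 1
        rw [← IsScalarTower.algebraMap_apply k' K' K,
          IsScalarTower.algebraMap_apply k' k K]
      simp only [AddMonoidHom.coe_mk, ZeroHom.coe_mk]
      rw [h, h, TensorProduct.smul_tmul])

end TensorMapSec

section LiftGA

variable {k' K' k K : Type} [Field k'] [Field K'] [Field k] [Field K]
  [Algebra k' K'] [Algebra k K] [Algebra K' K]

/-- Transport of a group-algebra element along a lifting `ι` of Galois
automorphisms and the inclusion of coefficients. -/
def liftGA (ι : (K' ≃ₐ[k'] K') → (K ≃ₐ[k] K))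
    (f : MonoidAlgebra K' (K' ≃ₐ[k'] K')) : MonoidAlgebra K (K ≃ₐ[k] K) :=
  f.coeff.sum fun σ a => MonoidAlgebra.single (ι σ) (algebraMap K' K a)

end LiftGA

/-- The setting of an elementary abelian extension of degree `p²`:
`K = K₁K₂` with `K₁/k`, `K₂/k` of degree `p` with ramification jumps
`h₂ > h₁ > 0`; `σ₁` (resp. `σ₂`) is a nontrivial element of `G` acting
trivially on `K₂` (resp. `K₁`), and `π` is a uniformizer of `K`. -/
structure ZpSetting (p : ℕ) (k K : Type) [Field k] [Field K] [Algebra k K]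
    extends TotallyRamifiedD k K where
  π : K
  K₁ : IntermediateField k K
  K₂ : IntermediateField k K
  σ₁ : K ≃ₐ[k] K
  σ₂ : K ≃ₐ[k] K
  h₁ : ℤ
  h₂ : ℤ
  pp : p.Prime
  galois : IsGalois k K
  rank : Module.finrank k K = p ^ 2
  expP : ∀ σ : K ≃ₐ[k] K, σ ^ p = 1
  rank₁ : Module.finrank k ↥K₁ = p
  rank₂ : Module.finrank k ↥K₂ = p
  normal₁ : Normal k ↥K₁
  normal₂ : Normal k ↥K₂
  compositum : K₁ ⊔ K₂ = ⊤
  σ₁_ne : σ₁ ≠ 1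
  σ₂_ne : σ₂ ≠ 1
  σ₁_fix : ∀ x : K, x ∈ K₂ → σ₁ x = x
  σ₂_fix : ∀ x : K, x ∈ K₁ → σ₂ x = x
  h₁_pos : 0 < h₁
  h_lt : h₁ < h₂
  π_ne : π ≠ 0
  π_uni : toCDVF.v π = 1
  exists_uni₁ : ∃ x : K, x ∈ K₁ ∧ x ≠ 0 ∧ toCDVF.v x = (p : ℤ)
  exists_uni₂ : ∃ x : K, x ∈ K₂ ∧ x ≠ 0 ∧ toCDVF.v x = (p : ℤ)
  jump₁ : ∀ x : K, x ∈ K₁ → x ≠ 0 → toCDVF.v x = (p : ℤ) →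
    toCDVF.v (σ₁ x - x) = (p : ℤ) * (h₁ + 1)
  jump₂ : ∀ x : K, x ∈ K₂ → x ≠ 0 → toCDVF.v x = (p : ℤ) →
    toCDVF.v (σ₂ x - x) = (p : ℤ) * (h₂ + 1)

/-- The element `f_{ij} = (σ₁ - 1)^i (σ₂ - 1)^j ∈ k[G] ⊆ K[G]`. -/
def fijGA {p : ℕ} {k K : Type} [Field k] [Field K] [Algebra k K]
    (Z : ZpSetting p k K) (i j : ℕ) : MonoidAlgebra K (K ≃ₐ[k] K) :=
  (MonoidAlgebra.single Z.σ₁ (1 : K) - 1) ^ i *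
    (MonoidAlgebra.single Z.σ₂ (1 : K) - 1) ^ j

/-- The piecewise linear function `H(i,j)`. -/
def Hfun (p : ℕ) (h₁ h₂ d : ℤ) (i j : ℕ) : ℤ :=
  if (i : ℤ) + (j : ℤ) < (p : ℤ) - 1 then
    h₁ * i + ((p : ℤ) * h₂ - ((p : ℤ) - 1) * h₁) * j - d
  else ((p : ℤ) * i - ((p : ℤ) - 1) ^ 2) * h₁ + (p : ℤ) * h₂ * j

/-- The element `P(i,j) ∈ R = k̄[X]/(X^n - 1)`. -/
def Pel {K : Type} [Field K] (S : CDVF K) (n p : ℕ) (h₁ h₂ : ℤ) (i j : ℕ) :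
    S.Rring n :=
  if (i : ℤ) + (j : ℤ) < (p : ℤ) - 1 then
    ((S.mkX n) ^ h₁.toNat - 1) ^ (n - (i + j) - 1)
  else
    (∑ s ∈ Finset.range p,
        ((∏ l ∈ Finset.range i, ((s : ℤ) - ((l : ℤ) + 1) * h₁) : ℤ) : S.Rring n)
          * (S.mkX n) ^ (p * s)) *
    (∑ t ∈ Finset.range p,
        ((∏ l ∈ Finset.range j, ((t : ℤ) - ((l : ℤ) + 1) * h₂) : ℤ) : S.Rring n)
          * (S.mkX n) ^ (p * t))


section Statement9Aux

variable {K : Type} [Field K]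

/-- Auxiliary: `x = 0` or `m ≤ v x`. -/
abbrev Vge (S : CDVF K) (x : K) (m : ℤ) : Prop := x = 0 ∨ m ≤ S.v x

theorem vge_zero (S : CDVF K) (m : ℤ) : Vge S 0 m := Or.inl rfl

theorem vge_mono {S : CDVF K} {x : K} {m : ℤ} (h : Vge S x m) {m' : ℤ} (h' : m' ≤ m) :
    Vge S x m' := h.imp id fun h2 => le_trans h' h2

theorem v_neg (S : CDVF K) {x : K} (hx : x ≠ 0) : S.v (-x) = S.v x := by
  have h1 : (-1 : K) ≠ 0 := by simp
  have e : (-1 : K) * (-1) = 1 := by ring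
  have h2 := S.v_mul (x := (-1:K)) (y := (-1:K)) h1 h1
  rw [e, S.v_one] at h2
  have h3 := S.v_mul (x := (-1:K)) (y := x) h1 hx
  rw [neg_one_mul] at h3
  omega

theorem vge_neg {S : CDVF K} {x : K} {m : ℤ} (h : Vge S x m) : Vge S (-x) m := by
  rcases eq_or_ne x 0 with rfl|hx
  · simpa using h
  · exact Or.inr (by rw [v_neg S hx]; exact h.resolve_left hx)

theorem vge_add {S : CDVF K} {x y : K} {m : ℤ} (hx : Vge S x m) (hy : Vge S y m) :
    Vge S (x+y) m := by
  rcases eq_or_ne x 0 with rfl|hx0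
  · simpa using hy
  rcases eq_or_ne y 0 with rfl|hy0
  · simpa using hx
  rcases eq_or_ne (x+y) 0 with h|h
  · exact Or.inl h
  refine Or.inr ?_
  have h3 := S.v_add hx0 hy0 h
  have h1 := hx.resolve_left hx0
  have h2 := hy.resolve_left hy0
  omega

theorem vge_sub {S : CDVF K} {x y : K} {m : ℤ} (hx : Vge S x m) (hy : Vge S y m) :
    Vge S (x - y) m := by
  rw [sub_eq_add_neg]; exact vge_add hx (vge_neg hy)

theorem v_inv (S : CDVF K) {x : K} (hx : x ≠ 0) : S.v x⁻¹ = - S.v x := by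
  have h := S.v_mul hx (inv_ne_zero hx)
  rw [mul_inv_cancel₀ hx, S.v_one] at h
  omega

theorem v_pow (S : CDVF K) {x : K} (hx : x ≠ 0) (j : ℕ) : S.v (x ^ j) = j * S.v x := by
  induction j with
  | zero => simpa using S.v_one
  | succ j ih =>
    rw [pow_succ, S.v_mul (pow_ne_zero _ hx) hx, ih]
    push_cast; ring

theorem v_zpow (S : CDVF K) {x : K} (hx : x ≠ 0) (a : ℤ) : S.v (x ^ a) = a * S.v x := by
  cases a with
  | ofNat j => simpa using v_pow S hx j
  | negSucc j =>
    rw [zpow_negSucc, v_inv S (pow_ne_zero _ hx), v_pow S hx, Int.negSucc_eq]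
    push_cast; ring

theorem vge_mul {S : CDVF K} {x y : K} {a b : ℤ} (hx : Vge S x a) (hy : Vge S y b) :
    Vge S (x*y) (a+b) := by
  rcases eq_or_ne x 0 with rfl|h1
  · exact Or.inl (zero_mul _)
  rcases eq_or_ne y 0 with rfl|h2
  · exact Or.inl (mul_zero _)
  exact Or.inr (by rw [S.v_mul h1 h2]
                   exact add_le_add (hx.resolve_left h1) (hy.resolve_left h2))

theorem vge_sum {S : CDVF K} {ι : Type} [DecidableEq ι] {F : Finset ι} {x : ι → K} {m : ℤ}
    (h : ∀ a ∈ F, Vge S (x a) m) : Vge S (∑ a ∈ F, x a) m := by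
  induction F using Finset.induction_on with
  | empty => simpa using vge_zero S m
  | @insert a F ha ih =>
    rw [Finset.sum_insert ha]
    exact vge_add (h _ (Finset.mem_insert_self _ _))
      (ih fun b hb => h b (Finset.mem_insert_of_mem hb))

theorem val_sum_min {S : CDVF K} {ι : Type} [DecidableEq ι] (F : Finset ι) (x : ι → K)
    (hd : ∀ a ∈ F, ∀ b ∈ F, a ≠ b → x a ≠ 0 → x b ≠ 0 → S.v (x a) ≠ S.v (x b)) :
    (∀ a ∈ F, x a = 0) ∨
      ∃ r ∈ F, x r ≠ 0 ∧ (∑ m ∈ F, x m) ≠ 0 ∧ S.v (∑ m ∈ F, x m) = S.v (x r) ∧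
        ∀ a ∈ F, x a ≠ 0 → S.v (x r) ≤ S.v (x a) := by
  induction F using Finset.induction_on with
  | empty => exact Or.inl (by simp)
  | @insert a F ha ih =>
    have hd' : ∀ b ∈ F, ∀ c ∈ F, b ≠ c → x b ≠ 0 → x c ≠ 0 → S.v (x b) ≠ S.v (x c) :=
      fun b hb c hc => hd b (Finset.mem_insert_of_mem hb) c (Finset.mem_insert_of_mem hc)
    rcases ih hd' with h0 | ⟨r, hrF, hr0, hs0, hsv, hmin⟩
    · have hsum : ∑ m ∈ F, x m = 0 := Finset.sum_eq_zero h0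
      rcases eq_or_ne (x a) 0 with h|h
      · refine Or.inl fun b hb => ?_
        rcases Finset.mem_insert.mp hb with rfl|hb
        exacts [h, h0 b hb]
      · refine Or.inr ⟨a, Finset.mem_insert_self _ _, h, ?_, ?_, ?_⟩
        · rw [Finset.sum_insert ha, hsum, add_zero]; exact h
        · rw [Finset.sum_insert ha, hsum, add_zero]
        · intro b hb hb0
          rcases Finset.mem_insert.mp hb with rfl|hb
          · exact le_refl _
          · exact absurd (h0 b hb) hb0
    · rcases eq_or_ne (x a) 0 with h|h
      · refine Or.inr ⟨r, Finset.mem_insert_of_mem hrF, hr0, ?_, ?_, ?_⟩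
        · rw [Finset.sum_insert ha, h, zero_add]; exact hs0
        · rw [Finset.sum_insert ha, h, zero_add]; exact hsv
        · intro b hb hb0
          rcases Finset.mem_insert.mp hb with rfl|hb
          · exact absurd h hb0
          · exact hmin b hb hb0
      · have har : a ≠ r := fun e => ha (e ▸ hrF)
        have hne : S.v (x a) ≠ S.v (x r) :=
          hd a (Finset.mem_insert_self _ _) r (Finset.mem_insert_of_mem hrF) har h hr0
        have hsumne : x a + ∑ m ∈ F, x m ≠ 0 := by
          intro heq
          have hxa : x a = -(∑ m ∈ F, x m) := eq_neg_of_add_eq_zero_left heq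
          have : S.v (x a) = S.v (∑ m ∈ F, x m) := by rw [hxa, v_neg S hs0]
          exact hne (this.trans hsv)
        have hminv := S.v_add h hs0 hsumne
        rcases lt_or_gt_of_ne (hsv ▸ hne) with hlt | hgt
        · -- v (x a) < v (sum F)
          have hv : S.v (x a + ∑ m ∈ F, x m) = S.v (x a) := by
            have h2 : S.v (x a) = S.v ((x a + ∑ m ∈ F, x m) + -(∑ m ∈ F, x m)) := by
              congr 1; ring
            have h3 := S.v_add hsumne (neg_ne_zero.mpr hs0) (by simpa using h)
            rw [← h2, v_neg S hs0] at h3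
            omega
          refine Or.inr ⟨a, Finset.mem_insert_self _ _, h, ?_, ?_, ?_⟩
          · rw [Finset.sum_insert ha]; exact hsumne
          · rw [Finset.sum_insert ha]; exact hv
          · intro b hb hb0
            rcases Finset.mem_insert.mp hb with rfl|hb
            · exact le_refl _
            · have := hmin b hb hb0; omega
        · -- v (sum F) < v (x a)
          have hv : S.v (x a + ∑ m ∈ F, x m) = S.v (∑ m ∈ F, x m) := by
            have h2 : S.v (∑ m ∈ F, x m) = S.v ((x a + ∑ m ∈ F, x m) + -(x a)) := by
              congr 1; ring
            have h3 := S.v_add hsumne (neg_ne_zero.mpr h) (by simpa using hs0)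
            rw [← h2, v_neg S h] at h3
            omega
          refine Or.inr ⟨r, Finset.mem_insert_of_mem hrF, hr0, ?_, ?_, ?_⟩
          · rw [Finset.sum_insert ha]; exact hsumne
          · rw [Finset.sum_insert ha, hv]; exact hsv
          · intro b hb hb0
            rcases Finset.mem_insert.mp hb with rfl|hb
            · omega
            · exact hmin b hb hb0

theorem vge_of_sum {S : CDVF K} {ι : Type} [DecidableEq ι] {F : Finset ι} {x : ι → K}
    (hd : ∀ a ∈ F, ∀ b ∈ F, a ≠ b → x a ≠ 0 → x b ≠ 0 → S.v (x a) ≠ S.v (x b))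
    {t : ℤ} (h : Vge S (∑ m ∈ F, x m) t) : ∀ a ∈ F, Vge S (x a) t := by
  intro a haF
  rcases val_sum_min F x hd with h0 | ⟨r, _, _, hs0, hsv, hmin⟩
  · exact Or.inl (h0 a haF)
  · rcases eq_or_ne (x a) 0 with h'|h'
    · exact Or.inl h'
    · refine Or.inr ?_
      have h1 := h.resolve_left hs0
      have h2 := hmin a haF h'
      omega

end Statement9Aux

section Statement9Aux2

variable {k K : Type} [Field k] [Field K] [Algebra k K]

theorem algMap_ne (c : k) (hc : c ≠ 0) : algebraMap k K c ≠ 0 :=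
  fun h => hc ((algebraMap k K).injective (h.trans (map_zero _).symm))

theorem trace_algMul (c : k) (x : K) :
    Algebra.trace k K (algebraMap k K c * x) = c * Algebra.trace k K x := by
  rw [← Algebra.smul_def, map_smul, smul_eq_mul]

theorem trace_vge (S : TotallyRamifiedD k K) {w : K} (hw : w ≠ 0) :
    Algebra.trace k K w = 0 ∨
      S.toCDVF.v w + S.depth ≤ S.toCDVF.v (algebraMap k K (Algebra.trace k K w)) := by
  obtain ⟨t, ht0, htn⟩ := S.exists_base_uniformizer
  have htK : algebraMap k K t ≠ 0 := algMap_ne t ht0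
  have hn : 0 < (Module.finrank k K : ℤ) := by
    have := S.finiteDim
    exact_mod_cast Module.finrank_pos
  set n : ℤ := (Module.finrank k K : ℤ) with hdefn
  set a : ℤ := S.toCDVF.v w + S.depth + n - 1 with hdefa
  set m : ℤ := a / n with hdefm
  have hmod := Int.mul_ediv_add_emod a n
  rw [← hdefm] at hmod
  have hmod2 := Int.emod_nonneg a (ne_of_gt hn)
  have hmod3 := Int.emod_lt_of_pos a hn
  have hcomm : m * n = n * m := mul_comm m n
  set w' : K := w * (algebraMap k K t) ^ (-m) with hdefw'
  have hw' : w' ≠ 0 := mul_ne_zero hw (zpow_ne_zero _ htK)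
  have hvw' : S.toCDVF.v w' = S.toCDVF.v w - n * m := by
    rw [hdefw', S.toCDVF.v_mul hw (zpow_ne_zero _ htK), v_zpow _ htK, htn]; ring
  have h1 : 1 - S.depth - n ≤ S.toCDVF.v w' := by omega
  have h2 := (S.depth_spec w').mpr (Or.inr h1) 1 (Or.inr (le_of_eq S.toCDVF.v_one.symm))
  rw [mul_one] at h2
  have hww : w = w' * (algebraMap k K t) ^ m := by
    rw [hdefw', mul_assoc, ← zpow_add₀ htK, neg_add_cancel, zpow_zero, mul_one]
  have htr : Algebra.trace k K w = t ^ m * Algebra.trace k K w' := by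
    rw [hww, mul_comm w', ← map_zpow₀, trace_algMul]
  rcases eq_or_ne (Algebra.trace k K w') 0 with h3|h3
  · exact Or.inl (by rw [htr, h3, mul_zero])
  · refine Or.inr ?_
    have h4 : algebraMap k K (Algebra.trace k K w') ≠ 0 := algMap_ne _ h3
    have h5 := h2.resolve_left h3
    rw [htr, map_mul, map_zpow₀, S.toCDVF.v_mul (zpow_ne_zero _ htK) h4, v_zpow _ htK, htn]
    omega

theorem terms_distinct (S : TotallyRamifiedD k K) {π : K} (hπ0 : π ≠ 0)
    (hπ1 : S.toCDVF.v π = 1) (c : ℕ → k) :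
    ∀ a ∈ Finset.range (Module.finrank k K), ∀ b ∈ Finset.range (Module.finrank k K),
      a ≠ b → algebraMap k K (c a) * π ^ a ≠ 0 → algebraMap k K (c b) * π ^ b ≠ 0 →
      S.toCDVF.v (algebraMap k K (c a) * π ^ a) ≠ S.toCDVF.v (algebraMap k K (c b) * π ^ b) := by
  intro a hma b hmb hab h1 h2
  have ha1 : algebraMap k K (c a) ≠ 0 := fun h => h1 (by rw [h, zero_mul])
  have hb1 : algebraMap k K (c b) ≠ 0 := fun h => h2 (by rw [h, zero_mul])
  have hca : c a ≠ 0 := fun h => ha1 (by rw [h, map_zero])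
  have hcb : c b ≠ 0 := fun h => hb1 (by rw [h, map_zero])
  obtain ⟨qa, hqa⟩ := S.val_dvd (c a) hca
  obtain ⟨qb, hqb⟩ := S.val_dvd (c b) hcb
  have hna : a < Module.finrank k K := Finset.mem_range.mp hma
  have hnb : b < Module.finrank k K := Finset.mem_range.mp hmb
  rw [S.toCDVF.v_mul ha1 (pow_ne_zero _ hπ0), S.toCDVF.v_mul hb1 (pow_ne_zero _ hπ0),
    v_pow _ hπ0, v_pow _ hπ0, hπ1, hqa, hqb]
  intro heq
  set n : ℤ := (Module.finrank k K : ℤ) with hdefn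
  have hdvd : n ∣ ((b:ℤ) - (a:ℤ)) := ⟨qa - qb, by rw [mul_sub]; omega⟩
  rcases hdvd with ⟨q, hq⟩
  have hna' : (a:ℤ) < n := by rw [hdefn]; exact_mod_cast hna
  have hnb' : (b:ℤ) < n := by rw [hdefn]; exact_mod_cast hnb
  have hn0 : 0 < n := by omega
  have hq0 : q = 0 := by nlinarith
  rw [hq0, mul_zero] at hq
  exact hab (by omega)

theorem digit (S : TotallyRamifiedD k K) {π : K} (hπ0 : π ≠ 0) (hπ1 : S.toCDVF.v π = 1)
    {u : K} (hu : Vge S.toCDVF u 0) :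
    ∃ (c : k) (u' : K), Vge S.toCDVF (algebraMap k K c) 0 ∧ Vge S.toCDVF u' 0 ∧
      u = algebraMap k K c + π * u' := by
  obtain ⟨c, hc⟩ := S.residue_trivial u hu
  have hc' : Vge S.toCDVF (u - algebraMap k K c) 1 := hc
  refine ⟨c, (u - algebraMap k K c) / π, ?_, ?_, ?_⟩
  · have h1 : algebraMap k K c = u + -(u - algebraMap k K c) := by ring
    rw [h1]
    exact vge_add hu (vge_neg (vge_mono hc' (by norm_num)))
  · rcases eq_or_ne (u - algebraMap k K c) 0 with h|h
    · rw [h, zero_div]; exact vge_zero _ _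
    · refine Or.inr ?_
      rw [div_eq_mul_inv, S.toCDVF.v_mul h (inv_ne_zero hπ0), v_inv _ hπ0, hπ1]
      have := hc'.resolve_left h
      omega
  · field_simp; ring

theorem digits (S : TotallyRamifiedD k K) {π : K} (hπ0 : π ≠ 0) (hπ1 : S.toCDVF.v π = 1)
    (j : ℕ) : ∀ u : K, Vge S.toCDVF u 0 →
    ∃ (c : ℕ → k) (u' : K), (∀ m, Vge S.toCDVF (algebraMap k K (c m)) 0) ∧ Vge S.toCDVF u' 0 ∧
      u = (∑ m ∈ Finset.range j, algebraMap k K (c m) * π ^ m) + π ^ j * u' := by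
  induction j with
  | zero =>
    intro u hu
    exact ⟨fun _ => 0, u, fun m => by simpa using vge_zero S.toCDVF 0, hu, by simp⟩
  | succ j ih =>
    intro u hu
    obtain ⟨c, u', hc, hu', he⟩ := ih u hu
    obtain ⟨c', u'', hc', hu'', he'⟩ := digit S hπ0 hπ1 hu'
    refine ⟨fun m => if m = j then c' else c m, u'', fun m => ?_, hu'', ?_⟩
    · by_cases h : m = j
      · simpa [h] using hc'
      · simpa [h] using hc m
    · have h4 : ∀ m ∈ Finset.range j,
          algebraMap k K (if m = j then c' else c m) * π ^ m
            = algebraMap k K (c m) * π ^ m := fun m hm => by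
        rw [if_neg (Finset.mem_range.mp hm).ne]
      simp only [Finset.sum_range_succ, ite_true, if_true]
      rw [Finset.sum_congr rfl h4, he, he']
      ring

theorem approx (S : TotallyRamifiedD k K) {π : K} (hπ0 : π ≠ 0) (hπ1 : S.toCDVF.v π = 1)
    {t : k} (ht0 : t ≠ 0) (htn : S.toCDVF.v (algebraMap k K t) = (Module.finrank k K : ℤ))
    (N : ℕ) : ∀ w : K, Vge S.toCDVF w 0 →
    ∃ (c : ℕ → k) (u : K), (∀ m, Vge S.toCDVF (algebraMap k K (c m)) 0) ∧ Vge S.toCDVF u 0 ∧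
      w = (∑ m ∈ Finset.range (Module.finrank k K), algebraMap k K (c m) * π ^ m)
        + (algebraMap k K t) ^ N * u := by
  have htK : algebraMap k K t ≠ 0 := algMap_ne t ht0
  induction N with
  | zero =>
    intro w hw
    exact ⟨fun _ => 0, w, fun m => by simpa using vge_zero S.toCDVF 0, hw, by simp⟩
  | succ N ih =>
    intro w hw
    obtain ⟨c, u, hc, hu, he⟩ := ih w hw
    obtain ⟨c', u', hc', hu', he'⟩ := digits S hπ0 hπ1 (Module.finrank k K) u hu
    refine ⟨fun m => c m + t ^ N * c' m, π ^ (Module.finrank k K) * u' / algebraMap k K t,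
      fun m => ?_, ?_, ?_⟩
    · have h1 : algebraMap k K (c m + t ^ N * c' m)
          = algebraMap k K (c m) + (algebraMap k K t) ^ N * algebraMap k K (c' m) := by
        rw [map_add, map_mul, map_pow]
      rw [h1]
      refine vge_add (hc m) ?_
      have h2 : Vge S.toCDVF ((algebraMap k K t) ^ N) 0 := Or.inr (by
        rw [v_pow _ htK, htn]; positivity)
      simpa using vge_mul h2 (hc' m)
    · rcases eq_or_ne u' 0 with rfl|h
      · rw [mul_zero, zero_div]; exact vge_zero _ _
      · refine Or.inr ?_
        rw [div_eq_mul_inv, S.toCDVF.v_mul (mul_ne_zero (pow_ne_zero _ hπ0) h) (inv_ne_zero htK),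
          S.toCDVF.v_mul (pow_ne_zero _ hπ0) h, v_pow _ hπ0, v_inv _ htK, hπ1, htn]
        have := hu'.resolve_left h
        omega
    · have hsplit : ∑ m ∈ Finset.range (Module.finrank k K),
          algebraMap k K (c m + t ^ N * c' m) * π ^ m
          = (∑ m ∈ Finset.range (Module.finrank k K), algebraMap k K (c m) * π ^ m)
            + (algebraMap k K t) ^ N
              * ∑ m ∈ Finset.range (Module.finrank k K), algebraMap k K (c' m) * π ^ m := by
        rw [Finset.mul_sum, ← Finset.sum_add_distrib]
        refine Finset.sum_congr rfl fun m _ => ?_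
        rw [map_add, map_mul, map_pow]; ring
      rw [hsplit, he, he']
      have h3 : (algebraMap k K t) ^ (N+1) * (π ^ (Module.finrank k K) * u' / algebraMap k K t)
          = (algebraMap k K t) ^ N * (π ^ (Module.finrank k K) * u') := by
        rw [pow_succ]
        field_simp
      rw [h3]
      ring

end Statement9Aux2

section Statement9Aux3

variable {k K : Type} [Field k] [Field K] [Algebra k K]

theorem dual_val (S : TotallyRamifiedD k K) {π : K} (hπ0 : π ≠ 0) (hπ1 : S.toCDVF.v π = 1)
    {z : K} (hz0 : z ≠ 0) {r : ℕ} (hr : r < Module.finrank k K)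
    (hzd : ∀ m < Module.finrank k K,
      Algebra.trace k K (z * π ^ m) = if m = r then 1 else 0) :
    -S.depth - r ≤ S.toCDVF.v z := by
  classical
  obtain ⟨t, ht0, htn⟩ := S.exists_base_uniformizer
  have htK : algebraMap k K t ≠ 0 := algMap_ne t ht0
  have hn : 0 < (Module.finrank k K : ℤ) := by
    have := S.finiteDim
    exact_mod_cast Module.finrank_pos
  set n : ℤ := (Module.finrank k K : ℤ) with hdefn
  set d : ℤ := S.depth with hdefd
  set x : K := z * π ^ ((r:ℤ) + 1 - n) with hdefx
  have hx0 : x ≠ 0 := mul_ne_zero hz0 (zpow_ne_zero _ hπ0)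
  have hP : ∀ y : K, (y = 0 ∨ 0 ≤ S.toCDVF.v y) →
      (Algebra.trace k K (x * y) = 0 ∨
        0 ≤ S.toCDVF.v (algebraMap k K (Algebra.trace k K (x * y)))) := by
    intro y hy
    rcases eq_or_ne y 0 with rfl|hy0
    · exact Or.inl (by rw [mul_zero, map_zero])
    have hvy : 0 ≤ S.toCDVF.v y := hy.resolve_left hy0
    set w : K := π ^ ((r:ℤ) + 1 - n) * algebraMap k K t * y with hdefw
    have hw0 : w ≠ 0 := mul_ne_zero (mul_ne_zero (zpow_ne_zero _ hπ0) htK) hy0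
    have hvw : S.toCDVF.v w = (r:ℤ) + 1 + S.toCDVF.v y := by
      rw [hdefw, S.toCDVF.v_mul (mul_ne_zero (zpow_ne_zero _ hπ0) htK) hy0,
        S.toCDVF.v_mul (zpow_ne_zero _ hπ0) htK, v_zpow _ hπ0, hπ1, htn]
      ring
    have key : Algebra.trace k K (z * w) = 0 ∨
        n ≤ S.toCDVF.v (algebraMap k K (Algebra.trace k K (z * w))) := by
      set N : ℕ := (n - S.toCDVF.v z - d).toNat + (r + 1) with hdefN
      have hN0 := Int.self_le_toNat (n - S.toCDVF.v z - d)
      have hN1 : (r:ℤ) + 1 ≤ (N:ℤ) := by rw [hdefN]; push_cast; omega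
      have hN2 : n - S.toCDVF.v z - d ≤ (N:ℤ) := by rw [hdefN]; push_cast; omega
      have hNn : (N:ℤ) ≤ n * N := le_mul_of_one_le_left (by positivity) hn
      obtain ⟨c, u, hc, hu, he⟩ := approx S hπ0 hπ1 ht0 htn N w (Or.inr (by omega))
      have hvtN : S.toCDVF.v ((algebraMap k K t) ^ N) = n * N := by
        rw [v_pow _ htK, htn]; ring
      have hsge : Vge S.toCDVF (∑ m ∈ Finset.range (Module.finrank k K),
          algebraMap k K (c m) * π ^ m) ((r:ℤ) + 1) := by
        have hrw : (∑ m ∈ Finset.range (Module.finrank k K), algebraMap k K (c m) * π ^ m)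
            = w - (algebraMap k K t) ^ N * u := by rw [he]; ring
        rw [hrw]
        refine vge_sub (Or.inr (by omega)) ?_
        rcases eq_or_ne u 0 with rfl|hu0
        · exact Or.inl (mul_zero _)
        · refine Or.inr ?_
          rw [S.toCDVF.v_mul (pow_ne_zero _ htK) hu0, hvtN]
          have := hu.resolve_left hu0
          omega
      have hterms := vge_of_sum (terms_distinct S hπ0 hπ1 c) hsge
      have hcr : Vge S.toCDVF (algebraMap k K (c r)) n := by
        have h1 := hterms r (Finset.mem_range.mpr hr)
        rcases h1 with h1|h1
        · rcases mul_eq_zero.mp h1 with h2|h2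
          · exact Or.inl h2
          · exact absurd h2 (pow_ne_zero _ hπ0)
        · rcases eq_or_ne (c r) 0 with h2|h2
          · exact Or.inl (by rw [h2, map_zero])
          · refine Or.inr ?_
            have h3 : algebraMap k K (c r) ≠ 0 := algMap_ne _ h2
            rw [S.toCDVF.v_mul h3 (pow_ne_zero _ hπ0), v_pow _ hπ0, hπ1] at h1
            obtain ⟨q, hq⟩ := S.val_dvd (c r) h2
            rw [hq] at h1 ⊢
            rcases le_or_gt 1 q with h5|h5
            · exact le_mul_of_one_le_right hn.le h5
            · have h6 : n * q ≤ 0 := mul_nonpos_of_nonneg_of_nonpos hn.le (by omega)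
              linarith
      have htr_eq : Algebra.trace k K (z * w) = c r + t ^ N * Algebra.trace k K (z * u) := by
        rw [he, mul_add, Finset.mul_sum, map_add, map_sum]
        congr 1
        · have h1 : ∀ m ∈ Finset.range (Module.finrank k K),
              Algebra.trace k K (z * (algebraMap k K (c m) * π ^ m))
                = if m = r then c m else 0 := by
            intro m hm
            have he2 : z * (algebraMap k K (c m) * π ^ m)
                = algebraMap k K (c m) * (z * π ^ m) := by ring
            rw [he2, trace_algMul, hzd m (Finset.mem_range.mp hm)]
            by_cases h : m = r <;> simp [h]
          rw [Finset.sum_congr rfl h1, Finset.sum_ite_eq' (Finset.range (Module.finrank k K)) r c,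
            if_pos (Finset.mem_range.mpr hr)]
        · have h2 : z * ((algebraMap k K t) ^ N * u) = algebraMap k K (t ^ N) * (z * u) := by
            rw [map_pow]; ring
          rw [h2, trace_algMul]
      have hvsum : Vge S.toCDVF (algebraMap k K (Algebra.trace k K (z * w))) n := by
        rw [htr_eq, map_add, map_mul, map_pow]
        refine vge_add hcr ?_
        rcases eq_or_ne u 0 with rfl|hu0
        · simpa using vge_zero S.toCDVF n
        rcases eq_or_ne (Algebra.trace k K (z * u)) 0 with h4|h4
        · rw [h4, map_zero, mul_zero]; exact vge_zero _ _
        · refine Or.inr ?_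
          have h5 := (trace_vge S (mul_ne_zero hz0 hu0)).resolve_left h4
          have h6 : algebraMap k K (Algebra.trace k K (z*u)) ≠ 0 := algMap_ne _ h4
          rw [S.toCDVF.v_mul (pow_ne_zero _ htK) h6, hvtN]
          rw [S.toCDVF.v_mul hz0 hu0] at h5
          have := hu.resolve_left hu0
          omega
      rcases hvsum with h|h
      · exact Or.inl ((map_eq_zero_iff _ ((algebraMap k K).injective)).mp h)
      · exact Or.inr h
    have hxyw : x * y = algebraMap k K t⁻¹ * (z * w) := by
      rw [hdefx, hdefw, map_inv₀]
      field_simp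
    have htr2 : Algebra.trace k K (x * y) = t⁻¹ * Algebra.trace k K (z * w) := by
      rw [hxyw, trace_algMul]
    rcases key with h|h
    · exact Or.inl (by rw [htr2, h, mul_zero])
    rcases eq_or_ne (Algebra.trace k K (z * w)) 0 with h0|h0
    · exact Or.inl (by rw [htr2, h0, mul_zero])
    refine Or.inr ?_
    rw [htr2, map_mul, map_inv₀]
    have h6 : algebraMap k K (Algebra.trace k K (z*w)) ≠ 0 := algMap_ne _ h0
    rw [S.toCDVF.v_mul (inv_ne_zero htK) h6, v_inv _ htK, htn]
    omega
  have h7 := (S.depth_spec x).mp hP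
  have h8 := h7.resolve_left hx0
  have h9 : S.toCDVF.v x = S.toCDVF.v z + ((r:ℤ) + 1 - n) := by
    rw [hdefx, S.toCDVF.v_mul hz0 (zpow_ne_zero _ hπ0), v_zpow _ hπ0, hπ1]
    ring
  omega

end Statement9Aux3

section Statement9Aux4

variable {k K : Type} [Field k] [Field K] [Algebra k K] [FiniteDimensional k K]

theorem applyGA_eq_sum (f : MonoidAlgebra K (K ≃ₐ[k] K)) (x : K) :
    applyGA k f x = ∑ σ : K ≃ₐ[k] K, f.coeff σ * σ x :=
  Finsupp.sum_fintype _ _ (fun _ => zero_mul _)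

theorem applyGA_zero (x : K) : applyGA k (0 : MonoidAlgebra K (K ≃ₐ[k] K)) x = 0 := by
  simp [applyGA]

theorem applyGA_add (f g : MonoidAlgebra K (K ≃ₐ[k] K)) (x : K) :
    applyGA k (f + g) x = applyGA k f x + applyGA k g x := by
  rw [applyGA_eq_sum, applyGA_eq_sum, applyGA_eq_sum, ← Finset.sum_add_distrib]
  exact Finset.sum_congr rfl fun σ _ => by rw [MonoidAlgebra.coeff_add, Finsupp.add_apply, add_mul]

theorem applyGA_neg (f : MonoidAlgebra K (K ≃ₐ[k] K)) (x : K) :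
    applyGA k (-f) x = - applyGA k f x := by
  rw [applyGA_eq_sum, applyGA_eq_sum, ← Finset.sum_neg_distrib]
  exact Finset.sum_congr rfl fun σ _ => by rw [MonoidAlgebra.coeff_neg, Finsupp.neg_apply, neg_mul]

theorem applyGA_single (σ : K ≃ₐ[k] K) (a x : K) :
    applyGA k (MonoidAlgebra.single σ a) x = a * σ x := by
  rw [applyGA, MonoidAlgebra.coeff_single]; exact Finsupp.sum_single_index (zero_mul _)

theorem applyGA_finsetSum {ι : Type} (F : Finset ι) (g : ι → MonoidAlgebra K (K ≃ₐ[k] K))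
    (x : K) : applyGA k (∑ r ∈ F, g r) x = ∑ r ∈ F, applyGA k (g r) x := by
  classical
  induction F using Finset.induction_on with
  | empty => simp [applyGA_zero]
  | @insert a F ha ih => rw [Finset.sum_insert ha, Finset.sum_insert ha, applyGA_add, ih]

theorem applyGA_smul (f : MonoidAlgebra K (K ≃ₐ[k] K)) (c : k) (x : K) :
    applyGA k f (c • x) = c • applyGA k f x := by
  rw [applyGA_eq_sum, applyGA_eq_sum, Finset.smul_sum]
  refine Finset.sum_congr rfl fun σ _ => ?_
  rw [map_smul, mul_smul_comm]

/-- `applyGA` as a `k`-linear map in the argument. -/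
def applyLin (f : MonoidAlgebra K (K ≃ₐ[k] K)) : K →ₗ[k] K where
  toFun x := applyGA k f x
  map_add' x y := by
    show applyGA k f (x + y) = applyGA k f x + applyGA k f y
    rw [applyGA_eq_sum, applyGA_eq_sum, applyGA_eq_sum, ← Finset.sum_add_distrib]
    exact Finset.sum_congr rfl fun σ _ => by rw [map_add, mul_add]
  map_smul' c x := applyGA_smul f c x

theorem phiGA_tmul (x y : K) :
    phiGA k K (x ⊗ₜ[k] y) = ∑ σ : K ≃ₐ[k] K, MonoidAlgebra.single σ (x * σ y) :=
  TensorProduct.lift.tmul x y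

theorem applyGA_phi_tmul [IsGalois k K] (x y w : K) :
    applyGA k (phiGA k K (x ⊗ₜ[k] y)) w = x * algebraMap k K (Algebra.trace k K (y * w)) := by
  rw [phiGA_tmul, applyGA_finsetSum, trace_eq_sum_automorphisms, Finset.mul_sum]
  refine Finset.sum_congr rfl fun σ _ => ?_
  rw [applyGA_single, map_mul]
  ring

theorem applyGA_injective (f g : MonoidAlgebra K (K ≃ₐ[k] K))
    (h : ∀ x : K, applyGA k f x = applyGA k g x) : f = g := by
  classical
  let emb : (K ≃ₐ[k] K) → (K →* K) := fun σ => ⟨⟨σ, map_one σ⟩, map_mul σ⟩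
  have hinj : Function.Injective emb := by
    intro σ τ hst
    ext x
    exact DFunLike.congr_fun hst x
  have hli := (linearIndependent_monoidHom K K).comp emb hinj
  have hz : (∑ σ : K ≃ₐ[k] K, (f.coeff σ - g.coeff σ) •
      (((fun (h : K →* K) => (h : K → K)) ∘ emb) σ)) = 0 := by
    funext x
    simp only [Finset.sum_apply, Pi.smul_apply, Function.comp_apply, smul_eq_mul, Pi.zero_apply]
    have h1 : ∀ σ : K ≃ₐ[k] K, (f.coeff σ - g.coeff σ) * (emb σ : K → K) x = f.coeff σ * σ x - g.coeff σ * σ x := by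
      intro σ
      rw [sub_mul]
      rfl
    rw [Finset.sum_congr rfl fun σ _ => h1 σ, Finset.sum_sub_distrib,
      ← applyGA_eq_sum, ← applyGA_eq_sum, h x, sub_self]
  have hcoef := Fintype.linearIndependent_iff.mp hli (fun σ => f.coeff σ - g.coeff σ) hz
  ext σ
  exact sub_eq_zero.mp (hcoef σ)

theorem powLinearIndependent (S : TotallyRamifiedD k K) {π : K} (hπ0 : π ≠ 0)
    (hπ1 : S.toCDVF.v π = 1) :
    LinearIndependent k (fun j : Fin (Module.finrank k K) => π ^ (j:ℕ)) := by
  classical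
  rw [Fintype.linearIndependent_iff]
  intro g hg i
  by_contra hgi
  set c : ℕ → k := fun m => if h : m < Module.finrank k K then g ⟨m, h⟩ else 0 with hdefc
  set x : Fin (Module.finrank k K) → K :=
    fun j => algebraMap k K (g j) * π ^ (j:ℕ) with hdefx
  have hxc : ∀ j : Fin (Module.finrank k K),
      x j = algebraMap k K (c (j:ℕ)) * π ^ (j:ℕ) := by
    intro j
    rw [hdefx, hdefc]
    simp [j.isLt]
  have hd : ∀ a ∈ (Finset.univ : Finset (Fin (Module.finrank k K))), ∀ b ∈ Finset.univ,
      a ≠ b → x a ≠ 0 → x b ≠ 0 → S.toCDVF.v (x a) ≠ S.toCDVF.v (x b) := by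
    intro a _ b _ hab h1 h2
    rw [hxc a] at h1 ⊢
    rw [hxc b] at h2 ⊢
    exact terms_distinct S hπ0 hπ1 c (a:ℕ) (Finset.mem_range.mpr a.isLt)
      (b:ℕ) (Finset.mem_range.mpr b.isLt) (fun hv => hab (Fin.ext hv)) h1 h2
  have hsum : ∑ j, x j = 0 := by
    rw [← hg]
    exact Finset.sum_congr rfl fun j _ => (Algebra.smul_def (g j) (π ^ (j:ℕ))).symm
  rcases val_sum_min Finset.univ x hd with h0 | ⟨r, _, _, hs0, _, _⟩
  · have h1 := h0 i (Finset.mem_univ i)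
    rw [hdefx] at h1
    rcases mul_eq_zero.mp h1 with h2|h2
    · exact hgi ((map_eq_zero_iff _ ((algebraMap k K).injective)).mp h2)
    · exact pow_ne_zero _ hπ0 h2
  · exact hs0 hsum

end Statement9Aux4

end
/-- For every `i ∈ ℤ` one has `C_{i+d} = φ(X_i)`. -/
theorem statement9 {k K : Type} [Field k] [Field K] [Algebra k K]
    [FiniteDimensional k K] [IsGalois k K] (S : TotallyRamifiedD k K) :
    ∀ i : ℤ,
      CfilGA k S.toCDVF (i + S.depth) =
        ⇑(phiGA k K) '' ((Xfil k K S.toCDVF i : AddSubgroup (K ⊗[k] K)) : Set (K ⊗[k] K)) := by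
  classical
  intro i
  obtain ⟨π, hπ0, hπ1⟩ := S.toCDVF.exists_uniformizer
  have hnpos : 0 < Module.finrank k K := Module.finrank_pos
  haveI : Nonempty (Fin (Module.finrank k K)) := ⟨⟨0, hnpos⟩⟩
  have hli := powLinearIndependent S hπ0 hπ1
  let pb : Module.Basis (Fin (Module.finrank k K)) k K :=
    basisOfLinearIndependentOfCardEqFinrank hli (by simp)
  have hpb : ∀ j, pb j = π ^ (j:ℕ) := fun j => by
    have h := coe_basisOfLinearIndependentOfCardEqFinrank hli (by simp)
    exact congrFun h j
  have hB : (Algebra.traceForm k K).Nondegenerate := traceForm_nondegenerate k K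
  let zb : Module.Basis (Fin (Module.finrank k K)) k K := LinearMap.BilinForm.dualBasis (Algebra.traceForm k K) hB pb
  have hdual : ∀ (s : Fin (Module.finrank k K)) (m : ℕ), m < Module.finrank k K →
      Algebra.trace k K (zb s * π ^ m) = if m = (s:ℕ) then 1 else 0 := by
    intro s m hm
    have h1 := LinearMap.BilinForm.apply_dualBasis_left (B := Algebra.traceForm k K) hB pb s ⟨m, hm⟩
    rw [hpb] at h1
    rw [Algebra.traceForm_apply] at h1
    rw [h1]
    by_cases h : m = (s:ℕ)
    · rw [if_pos (Fin.ext h), if_pos h]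
    · rw [if_neg (fun hh => h (congrArg Fin.val hh)), if_neg h]
  have hzval : ∀ s : Fin (Module.finrank k K), -S.depth - ((s:ℕ):ℤ) ≤ S.toCDVF.v (zb s) := fun s =>
    dual_val S hπ0 hπ1 (zb.ne_zero s) s.isLt (fun m hm => hdual s m hm)
  ext f
  simp only [Set.mem_image, SetLike.mem_coe]
  constructor
  · intro hf
    simp only [CfilGA, Set.mem_setOf_eq] at hf
    refine ⟨∑ s : Fin (Module.finrank k K), (applyGA k f (zb s)) ⊗ₜ[k] (π ^ (s:ℕ)), ?_, ?_⟩
    · refine AddSubgroup.sum_mem _ fun s _ => ?_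
      rcases eq_or_ne (applyGA k f (zb s)) 0 with h|h
      · rw [h, TensorProduct.zero_tmul]
        exact (Xfil k K S.toCDVF i).zero_mem
      · refine AddSubgroup.subset_closure ?_
        refine ⟨applyGA k f (zb s), π ^ (s:ℕ), i - (s:ℕ), Or.inr ?_, Or.inr ?_, rfl⟩
        · have h1 := (hf (zb s) (zb.ne_zero s)).resolve_left h
          have h2 := hzval s
          omega
        · rw [v_pow _ hπ0, hπ1]
          omega
    · refine applyGA_injective _ _ fun x => ?_
      have hlin : applyLin (phiGA k K
          (∑ s : Fin (Module.finrank k K), (applyGA k f (zb s)) ⊗ₜ[k] (π ^ (s:ℕ))))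
          = applyLin f := by
        refine zb.ext fun s => ?_
        show applyGA k (phiGA k K
          (∑ r : Fin (Module.finrank k K), (applyGA k f (zb r)) ⊗ₜ[k] (π ^ (r:ℕ)))) (zb s)
          = applyGA k f (zb s)
        rw [map_sum, applyGA_finsetSum]
        have h1 : ∀ r : Fin (Module.finrank k K),
            applyGA k (phiGA k K ((applyGA k f (zb r)) ⊗ₜ[k] (π ^ (r:ℕ)))) (zb s)
              = if r = s then applyGA k f (zb r) else 0 := by
          intro r
          rw [applyGA_phi_tmul, mul_comm (π ^ (r:ℕ)), hdual s (r:ℕ) r.isLt]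
          by_cases h : r = s
          · rw [if_pos (congrArg Fin.val h), if_pos h, map_one, mul_one]
          · rw [if_neg (fun hh => h (Fin.ext hh)), if_neg h, map_zero, mul_zero]
        rw [Finset.sum_congr rfl (fun r _ => h1 r),
          Finset.sum_ite_eq' Finset.univ s (fun r => applyGA k f (zb r)),
          if_pos (Finset.mem_univ s)]
      exact DFunLike.congr_fun hlin x
  · rintro ⟨w, hw, rfl⟩
    refine AddSubgroup.closure_induction
      (p := fun w _ => phiGA k K w ∈ CfilGA k S.toCDVF (i + S.depth)) ?_ ?_ ?_ ?_ hw
    · rintro w0 ⟨a, b, j, ha, hb, rfl⟩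
      simp only [CfilGA, Set.mem_setOf_eq]
      intro x hx
      rw [applyGA_phi_tmul]
      rcases eq_or_ne a 0 with rfl|ha0
      · exact Or.inl (zero_mul _)
      rcases eq_or_ne b 0 with rfl|hb0
      · exact Or.inl (by rw [zero_mul, map_zero, map_zero, mul_zero])
      have haj : j ≤ S.toCDVF.v a := ha.resolve_left ha0
      have hbj : i - j ≤ S.toCDVF.v b := hb.resolve_left hb0
      rcases eq_or_ne (Algebra.trace k K (b * x)) 0 with h|h
      · exact Or.inl (by rw [h, map_zero, mul_zero])
      have h5 := (trace_vge S (mul_ne_zero hb0 hx)).resolve_left h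
      refine Or.inr ?_
      have h6 : algebraMap k K (Algebra.trace k K (b * x)) ≠ 0 := algMap_ne _ h
      rw [S.toCDVF.v_mul ha0 h6]
      rw [S.toCDVF.v_mul hb0 hx] at h5
      omega
    · simp only [CfilGA, Set.mem_setOf_eq]
      intro x hx
      exact Or.inl (by rw [map_zero, applyGA_zero])
    · intro x y hx hy px py
      simp only [CfilGA, Set.mem_setOf_eq] at px py ⊢
      intro w0 hw0
      rw [map_add, applyGA_add]
      exact vge_add (px w0 hw0) (py w0 hw0)
    · intro x hx px
      simp only [CfilGA, Set.mem_setOf_eq] at px ⊢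
      intro w0 hw0
      rw [map_neg, applyGA_neg]
      exact vge_neg (px w0 hw0)
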